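/- Let G be a finite simple graph on n ≥ 2 vertices with maximum degree Δ ≥ 1. Then f(G) ≤ ⌈(−3 + √(8Δ + 1))/2⌉. -/
import Mathlib


open Finset

variable {V : Type*}

open scoped Classical in
/-- Degree of `v` in the subgraph of `G` induced on the vertex set `A`
(number of neighbours of `v` inside `A`). -/
noncomputable def degOn (G : SimpleGraph V) (A : Finset V) (v : V) : ℕ :=
  (A.filter fun w => G.Adj v w).card

/-- Maximum degree of the subgraph of `G` induced on `A`. -/
noncomputable def maxDegOn (G : SimpleGraph V) (A : Finset V) : ℕ :=
  A.sup (degOn G A)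

open scoped Classical in
/-- The subgraph of `G` induced on `A` has fewer than `k` vertices or at least `k`
vertices realising its maximum degree. -/
def equates (G : SimpleGraph V) (k : ℕ) (A : Finset V) : Prop :=
  A.card < k ∨ k ≤ (A.filter fun v => degOn G A v = maxDegOn G A).card

open scoped Classical in
/-- `f_k` of the subgraph of `G` induced on `A`: the minimum number of vertices of `A`
whose deletion leaves an induced subgraph with fewer than `k` vertices or with at
least `k` vertices realising its maximum degree. -/
noncomputable def fkOn (G : SimpleGraph V) (k : ℕ) (A : Finset V) : ℕ :=
  sInf {m | ∃ S, S ⊆ A ∧ S.card = m ∧ equates G k (A \ S)}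

/-- `f_k(G)`. -/
noncomputable def fk [Fintype V] (G : SimpleGraph V) (k : ℕ) : ℕ :=
  fkOn G k Finset.univ

/-- `diff` of the subgraph of `G` induced on `A`: the largest degree minus the
second-largest degree (with multiplicity) of this subgraph. -/
noncomputable def diffOn (G : SimpleGraph V) (A : Finset V) : ℕ :=
  maxDegOn G A - ((A.val.map (degOn G A)).erase (maxDegOn G A)).sup

/-- `diff(G) = d₁ - d₂`, the difference between the largest and second-largest
vertex degrees of `G`. -/
noncomputable def diffDeg [Fintype V] (G : SimpleGraph V) : ℕ :=
  diffOn G Finset.univ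

open scoped Classical in
lemma degOn_mono (G : SimpleGraph V) {A B : Finset V} (h : A ⊆ B) (v : V) :
    degOn G A v ≤ degOn G B v := by
  unfold degOn
  exact Finset.card_le_card (Finset.filter_subset_filter _ h)

open scoped Classical in
lemma two_le_maxDegOn_of_unique (G : SimpleGraph V) {A : Finset V} (hA : 2 ≤ A.card)
    (hR : ¬ 2 ≤ (A.filter fun v => degOn G A v = maxDegOn G A).card) :
    2 ≤ maxDegOn G A := by
  by_contra hcon
  push_neg at hcon
  by_cases h0 : maxDegOn G A = 0
  · -- all degrees are 0, so everyone realises the max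
    apply hR
    have : (A.filter fun v => degOn G A v = maxDegOn G A) = A := by
      apply Finset.filter_true_of_mem
      intro u hu
      have h1 : degOn G A u ≤ maxDegOn G A := Finset.le_sup hu
      omega
    rw [this]; exact hA
  · -- max degree 1: an edge inside A gives two realisers
    have h : maxDegOn G A = 1 := by omega
    obtain ⟨v, hvA, hv'⟩ := Finset.exists_mem_eq_sup A
      (Finset.card_pos.mp (by omega)) (degOn G A)
    have hv : maxDegOn G A = degOn G A v := hv'
    have hdv : degOn G A v = 1 := by omega
    have hpos : 0 < (A.filter fun x => G.Adj v x).card := by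
      unfold degOn at hdv; omega
    obtain ⟨u, hu⟩ := Finset.card_pos.mp hpos
    rw [Finset.mem_filter] at hu
    have hadj : G.Adj u v := hu.2.symm
    have hvu : v ∈ A.filter fun x => G.Adj u x := Finset.mem_filter.mpr ⟨hvA, hadj⟩
    have hdu1 : 1 ≤ degOn G A u := by
      unfold degOn
      exact Finset.card_pos.mpr ⟨v, hvu⟩
    have hdu2 : degOn G A u ≤ maxDegOn G A := Finset.le_sup hu.1
    have hdu : degOn G A u = maxDegOn G A := by omega
    apply hR
    have hne : u ≠ v := G.ne_of_adj hadj
    have hsub : ({u, v} : Finset V) ⊆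
        A.filter fun x => degOn G A x = maxDegOn G A := by
      intro x hx
      rcases Finset.mem_insert.mp hx with rfl | hx
      · exact Finset.mem_filter.mpr ⟨hu.1, hdu⟩
      · rw [Finset.mem_singleton] at hx; subst hx
        exact Finset.mem_filter.mpr ⟨hvA, hv.symm⟩
    calc 2 = ({u, v} : Finset V).card := (Finset.card_pair hne).symm
      _ ≤ _ := Finset.card_le_card hsub

open scoped Classical in
/-- Key combinatorial lemma: whenever `2·Δ ≤ (t+1)(t+2)`, deleting at most `t`
vertices equates two maximum degrees (or leaves fewer than two vertices). -/
lemma exists_small_deletion (G : SimpleGraph V) (t : ℕ) :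
    ∀ A : Finset V, 2 ≤ A.card → 2 * maxDegOn G A ≤ (t + 1) * (t + 2) →
      ∃ S ⊆ A, S.card ≤ t ∧ equates G 2 (A \ S) := by
  induction t with
  | zero =>
    intro A hA hm
    refine ⟨∅, Finset.empty_subset _, by simp, ?_⟩
    rw [Finset.sdiff_empty]
    right
    by_contra hR
    push_neg at hR
    have := two_le_maxDegOn_of_unique G hA (by omega)
    omega
  | succ t ih =>
    intro A hA hm
    by_cases hR : 2 ≤ (A.filter fun v => degOn G A v = maxDegOn G A).card
    · exact ⟨∅, Finset.empty_subset _, by simp,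
        by rw [Finset.sdiff_empty]; exact Or.inr hR⟩
    set Δ := maxDegOn G A with hΔdef
    have hΔ2 : 2 ≤ Δ := two_le_maxDegOn_of_unique G hA hR
    obtain ⟨v, hvA, hv⟩ := Finset.exists_mem_eq_sup A
      (Finset.card_pos.mp (by omega)) (degOn G A)
    have hvd : degOn G A v = Δ := hv.symm
    -- `v` is the unique vertex of maximum degree
    have huniq : ∀ u ∈ A, degOn G A u = Δ → u = v := by
      intro u hu hdu
      have h1 : (A.filter fun x => degOn G A x = Δ).card ≤ 1 := by omega
      exact Finset.card_le_one.mp h1 u (Finset.mem_filter.mpr ⟨hu, hdu⟩) v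
        (Finset.mem_filter.mpr ⟨hvA, hvd⟩)
    have hAv : (A.erase v).Nonempty := by
      rw [← Finset.card_pos, Finset.card_erase_of_mem hvA]; omega
    obtain ⟨w, hwAe, hw⟩ := Finset.exists_mem_eq_sup _ hAv (degOn G A)
    set d₂ := (A.erase v).sup (degOn G A) with hd2def
    have hwv : w ≠ v := Finset.ne_of_mem_erase hwAe
    have hwA : w ∈ A := Finset.mem_of_mem_erase hwAe
    have hdw : degOn G A w = d₂ := hw.symm
    have hd2le : d₂ ≤ Δ := by
      rw [hdw.symm]; exact Finset.le_sup hwA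
    have hd2lt : d₂ < Δ := by
      rcases lt_or_eq_of_le hd2le with h | h
      · exact h
      · exact absurd (huniq w hwA (by omega)) hwv
    set g := Δ - d₂ with hgdef
    have hg1 : 1 ≤ g := by omega
    set Nv := A.filter (fun x => G.Adj v x) with hNvdef
    set Nw := A.filter (fun x => G.Adj w x) with hNwdef
    have hNvcard : Nv.card = Δ := by
      have : degOn G A v = Δ := hv.symm
      unfold degOn at this; exact this
    have hNwcard : Nw.card = d₂ := by
      unfold degOn at hdw; exact hdw
    -- key counting: `v` has at least `g` neighbours avoiding `w` and `N(w)`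
    have hkey : (Nv ∩ insert w Nw).card ≤ d₂ := by
      by_cases hadj : G.Adj v w
      · have hvNw : v ∈ Nw := Finset.mem_filter.mpr ⟨hvA, hadj.symm⟩
        have hsub : Nv ∩ insert w Nw ⊆ insert w (Nw.erase v) := by
          intro x hx
          rw [Finset.mem_inter] at hx
          have hxv : x ≠ v := (Finset.mem_filter.mp hx.1).2.ne'
          rcases Finset.mem_insert.mp hx.2 with rfl | hxNw
          · exact Finset.mem_insert_self _ _
          · exact Finset.mem_insert_of_mem (Finset.mem_erase.mpr ⟨hxv, hxNw⟩)
        have hd2pos : 1 ≤ d₂ := by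
          rw [← hNwcard]
          exact Finset.card_pos.mpr ⟨v, hvNw⟩
        calc (Nv ∩ insert w Nw).card ≤ (insert w (Nw.erase v)).card :=
              Finset.card_le_card hsub
          _ ≤ (Nw.erase v).card + 1 := Finset.card_insert_le _ _
          _ = (d₂ - 1) + 1 := by rw [Finset.card_erase_of_mem hvNw, hNwcard]
          _ = d₂ := by omega
      · have hsub : Nv ∩ insert w Nw ⊆ Nw := by
          intro x hx
          rw [Finset.mem_inter] at hx
          rcases Finset.mem_insert.mp hx.2 with rfl | hxNw
          · exact absurd (Finset.mem_filter.mp hx.1).2 hadj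
          · exact hxNw
        calc (Nv ∩ insert w Nw).card ≤ Nw.card := Finset.card_le_card hsub
          _ = d₂ := hNwcard
    have hC : g ≤ (Nv \ insert w Nw).card := by
      have := Finset.card_inter_add_card_sdiff Nv (insert w Nw)
      omega
    by_cases hgt : g ≤ t + 1
    · -- delete `g` neighbours of `v` avoiding `w` and its neighbours
      obtain ⟨S, hSsub, hScard⟩ := Finset.exists_subset_card_eq hC
      have hSNv : S ⊆ Nv := hSsub.trans (Finset.sdiff_subset)
      have hSA : S ⊆ A := hSNv.trans (Finset.filter_subset _ _)
      have hvS : v ∉ S := by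
        intro h
        exact G.irrefl (Finset.mem_filter.mp (hSNv h)).2
      have hwS : w ∉ S := by
        intro h
        exact (Finset.mem_sdiff.mp (hSsub h)).2 (Finset.mem_insert_self _ _)
      have hSNw : ∀ x ∈ S, x ∉ Nw := by
        intro x hx
        exact fun hxNw => (Finset.mem_sdiff.mp (hSsub hx)).2
          (Finset.mem_insert_of_mem hxNw)
      refine ⟨S, hSA, by omega, Or.inr ?_⟩
      set A' := A \ S with hA'def
      have hvA' : v ∈ A' := Finset.mem_sdiff.mpr ⟨hvA, hvS⟩
      have hwA' : w ∈ A' := Finset.mem_sdiff.mpr ⟨hwA, hwS⟩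
      have hdegv : degOn G A' v = Δ - g := by
        unfold degOn
        have heq : A'.filter (fun x => G.Adj v x) = Nv \ S := by
          ext x
          simp only [hA'def, hNvdef, Finset.mem_filter, Finset.mem_sdiff]
          tauto
        rw [heq, Finset.card_sdiff_of_subset hSNv, hNvcard, hScard]
      have hdegw : degOn G A' w = d₂ := by
        unfold degOn
        have heq : A'.filter (fun x => G.Adj w x) = Nw := by
          ext x
          simp only [hA'def, hNwdef, Finset.mem_filter, Finset.mem_sdiff]
          constructor
          · tauto
          · intro hx
            exact ⟨⟨hx.1, fun hxS => hSNw x hxS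
              (Finset.mem_filter.mpr ⟨hx.1, hx.2⟩)⟩, hx.2⟩
        rw [heq]; exact hNwcard
      have hle : ∀ u ∈ A', degOn G A' u ≤ Δ - g := by
        intro u hu
        have h1 : degOn G A' u ≤ degOn G A u :=
          degOn_mono G (Finset.sdiff_subset) u
        by_cases huv : u = v
        · subst huv; omega
        · have huAe : u ∈ A.erase v :=
            Finset.mem_erase.mpr ⟨huv, (Finset.mem_sdiff.mp hu).1⟩
          have h2 : degOn G A u ≤ d₂ := Finset.le_sup huAe
          omega
      have hmax : maxDegOn G A' = Δ - g := by
        apply le_antisymm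
        · exact Finset.sup_le hle
        · rw [← hdegv]; exact Finset.le_sup hvA'
      have hsub2 : ({v, w} : Finset V) ⊆
          A'.filter fun u => degOn G A' u = maxDegOn G A' := by
        intro x hx
        rcases Finset.mem_insert.mp hx with rfl | hx
        · exact Finset.mem_filter.mpr ⟨hvA', by rw [hdegv, hmax]⟩
        · rw [Finset.mem_singleton] at hx; subst hx
          exact Finset.mem_filter.mpr ⟨hwA', by rw [hdegw, hmax]; omega⟩
      calc 2 = ({v, w} : Finset V).card := (Finset.card_pair hwv.symm).symm
        _ ≤ _ := Finset.card_le_card hsub2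
    · -- large gap: delete `v` and recurse
      push_neg at hgt
      by_cases hA2 : A.card = 2
      · refine ⟨{v}, Finset.singleton_subset_iff.mpr hvA, by simp, Or.inl ?_⟩
        have : (A \ {v}).card = 1 := by
          rw [Finset.sdiff_singleton_eq_erase, Finset.card_erase_of_mem hvA, hA2]
        omega
      · have hA3 : 3 ≤ A.card := by omega
        have hcard' : 2 ≤ (A.erase v).card := by
          rw [Finset.card_erase_of_mem hvA]; omega
        have hmax' : maxDegOn G (A.erase v) ≤ d₂ := by
          apply Finset.sup_le
          intro u hu
          exact le_trans (degOn_mono G (Finset.erase_subset _ _) u)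
            (Finset.le_sup hu)
        have harith : 2 * maxDegOn G (A.erase v) ≤ (t + 1) * (t + 2) := by
          have hsum : d₂ + g = Δ := by omega
          nlinarith [hmax', hgt, hm, hsum]
        obtain ⟨S', hS'sub, hS'card, hS'eq⟩ := ih (A.erase v) hcard' harith
        have hvS' : v ∉ S' := fun h =>
          (Finset.mem_erase.mp (hS'sub h)).1 rfl
        refine ⟨insert v S', ?_, ?_, ?_⟩
        · exact Finset.insert_subset hvA
            (hS'sub.trans (Finset.erase_subset _ _))
        · rw [Finset.card_insert_of_notMem hvS']; omega
        · have heq : A \ insert v S' = (A.erase v) \ S' := by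
            ext x
            simp only [Finset.mem_sdiff, Finset.mem_insert, Finset.mem_erase]
            tauto
          rw [heq]; exact hS'eq

/-- If `G` is a graph on `n ≥ 2` vertices with maximum degree `Δ ≥ 1`,
then `f(G) ≤ ⌈(-3 + √(8Δ + 1)) / 2⌉`. -/
theorem stmt5 {V : Type*} [Fintype V] (G : SimpleGraph V)
    (hn : 2 ≤ Fintype.card V) (hΔ : 1 ≤ maxDegOn G Finset.univ) :
    (fk G 2 : ℤ) ≤
      ⌈(-3 + Real.sqrt (8 * (maxDegOn G Finset.univ : ℝ) + 1)) / 2⌉ := by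
  classical
  set Δ := maxDegOn G Finset.univ with hΔdef
  set x : ℝ := (-3 + Real.sqrt (8 * (Δ : ℝ) + 1)) / 2 with hxdef
  set m := ⌈x⌉ with hmdef
  have harg : (0:ℝ) ≤ 8 * (Δ : ℝ) + 1 := by positivity
  have hs0 : (0:ℝ) ≤ Real.sqrt (8 * (Δ : ℝ) + 1) := Real.sqrt_nonneg _
  have hs2 : (Real.sqrt (8 * (Δ : ℝ) + 1)) ^ 2 = 8 * (Δ : ℝ) + 1 :=
    Real.sq_sqrt harg
  have hΔR : (1:ℝ) ≤ (Δ : ℝ) := by exact_mod_cast hΔ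
  have hs3 : (3:ℝ) ≤ Real.sqrt (8 * (Δ : ℝ) + 1) := by nlinarith
  have hx0 : (0:ℝ) ≤ x := by rw [hxdef]; linarith
  have hm0 : 0 ≤ m := Int.ceil_nonneg hx0
  have hxm : x ≤ (m : ℝ) := Int.le_ceil x
  have hZR : 2 * (Δ : ℝ) ≤ ((m : ℝ) + 1) * ((m : ℝ) + 2) := by
    have h1 : Real.sqrt (8 * (Δ : ℝ) + 1) ≤ 2 * (m : ℝ) + 3 := by
      rw [hxdef] at hxm; linarith
    nlinarith
  have hZ : 2 * (Δ : ℤ) ≤ (m + 1) * (m + 2) := by exact_mod_cast hZR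
  set t := m.toNat with htdef
  have hmt : (t : ℤ) = m := Int.toNat_of_nonneg hm0
  have hN : 2 * Δ ≤ (t + 1) * (t + 2) := by
    have : 2 * (Δ : ℤ) ≤ ((t : ℤ) + 1) * ((t : ℤ) + 2) := by rw [hmt]; exact hZ
    exact_mod_cast this
  have hcardu : 2 ≤ (Finset.univ : Finset V).card := by
    rw [Finset.card_univ]; exact hn
  obtain ⟨S, hSsub, hScard, hSeq⟩ := exists_small_deletion G t Finset.univ hcardu hN
  have hfk : fk G 2 ≤ S.card := by
    apply Nat.sInf_le
    exact ⟨S, hSsub, rfl, hSeq⟩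
  have : (fk G 2 : ℤ) ≤ (t : ℤ) := by exact_mod_cast le_trans hfk hScard
  rw [hmt] at this
  exact this
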